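/- Let a > 0, let A be a real m × n matrix and b ∈ ℝᵐ with SOL(A,b) nonempty. Let (λ_k) be a sequence of positive real numbers with λ_k → 0, and for each k let x_k ≥ 0 be a global minimizer over {x ∈ ℝⁿ : x ≥ 0} of the function x ↦ ‖Ax − b‖₂² + λ_k P_a(x). Then every accumulation point x* of the sequence (x_k) satisfies A x* = b, x* ≥ 0, and P_a(x*) ≤ P_a(x) for all x ∈ SOL(A,b); that is, x* is a global minimizer of P_a over SOL(A,b). -/

import Mathlib

open Matrix Filter Topology

noncomputable def rho (a t : ℝ) : ℝ := a * |t| / (a * |t| + 1)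

noncomputable def Pa {n : ℕ} (a : ℝ) (x : Fin n → ℝ) : ℝ := ∑ i, rho a (x i)

open scoped Classical in
noncomputable def l0 {n : ℕ} (x : Fin n → ℝ) : ℕ :=
  (Finset.univ.filter fun i => x i ≠ 0).card

def SOL {m n : ℕ} (A : Matrix (Fin m) (Fin n) ℝ) (b : Fin m → ℝ) : Set (Fin n → ℝ) :=
  {x | A.mulVec x = b ∧ 0 ≤ x}

noncomputable def sqN {n : ℕ} (v : Fin n → ℝ) : ℝ := ∑ i, (v i) ^ 2

def projPos {n : ℕ} (v : Fin n → ℝ) : Fin n → ℝ := fun i => max 0 (v i)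

noncomputable def C1 {m n : ℕ} (A : Matrix (Fin m) (Fin n) ℝ) (b : Fin m → ℝ)
    (lam a : ℝ) (x : Fin n → ℝ) : ℝ :=
  sqN (A.mulVec x - b) + lam * Pa a x

noncomputable def C2 {m n : ℕ} (A : Matrix (Fin m) (Fin n) ℝ) (b : Fin m → ℝ)
    (lam a mu : ℝ) (x z : Fin n → ℝ) : ℝ :=
  mu * (C1 A b lam a x - sqN (A.mulVec x - A.mulVec z)) + sqN (x - z)

noncomputable def Bmu {m n : ℕ} (A : Matrix (Fin m) (Fin n) ℝ) (b : Fin m → ℝ)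
    (mu : ℝ) (z : Fin n → ℝ) : Fin n → ℝ :=
  z + mu • (Aᵀ.mulVec (b - A.mulVec z))

/-!
This is the convergence of the quadratic penalty method, with the residual `f x = ‖Ax - b‖²`
as penalty and `P_a` as objective. Comparing `x_k` with a point `y` of `SOL(A,b)`, where
`f y = 0`, gives `f x_k + λ_k P_a(x_k) ≤ λ_k P_a(y)`. Since both terms on the left are
nonnegative, this yields `P_a(x_k) ≤ P_a(y)` and `f x_k ≤ λ_k P_a(y) → 0`. Both bounds pass
to any cluster point because sublevel sets of lower semicontinuous functions are closed.
-/

section PenaltyMethod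

variable {X : Type*} {S : Set X} {f g : X → ℝ} {c : ℝ} {x₀ y : X}

theorem IsMinOn.penalized_le (h : IsMinOn (fun z => f z + c * g z) S x₀) (hyS : y ∈ S)
    (hfy : f y = 0) : f x₀ + c * g x₀ ≤ c * g y := by
  simpa [hfy] using isMinOn_iff.1 h y hyS

theorem IsMinOn.le_of_penalized (h : IsMinOn (fun z => f z + c * g z) S x₀) (hf : 0 ≤ f x₀)
    (hc : 0 < c) (hyS : y ∈ S) (hfy : f y = 0) : g x₀ ≤ g y :=
  le_of_mul_le_mul_left (by linarith [h.penalized_le hyS hfy]) hc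

theorem IsMinOn.penalty_le_of_penalized (h : IsMinOn (fun z => f z + c * g z) S x₀)
    (hg : 0 ≤ g x₀) (hc : 0 ≤ c) (hyS : y ∈ S) (hfy : f y = 0) : f x₀ ≤ c * g y := by
  nlinarith [h.penalized_le hyS hfy]

theorem isMinOn_of_mapClusterPt_penalized [TopologicalSpace X] (hS : IsClosed S)
    (hfc : LowerSemicontinuous f) (hgc : LowerSemicontinuous g) (hf : ∀ z, 0 ≤ f z)
    (hg : ∀ z, 0 ≤ g z) {lam : ℕ → ℝ} (hlam : ∀ k, 0 < lam k)
    (hlim : Tendsto lam atTop (𝓝 0)) {x : ℕ → X} (hxS : ∀ k, x k ∈ S)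
    (hmin : ∀ k, IsMinOn (fun z => f z + lam k * g z) S (x k))
    (hfeas : ∃ y ∈ S, f y = 0) {xstar : X} (hcl : MapClusterPt xstar atTop x) :
    xstar ∈ S ∧ f xstar = 0 ∧ IsMinOn g {y ∈ S | f y = 0} xstar := by
  obtain ⟨y₀, hy₀S, hfy₀⟩ := hfeas
  have hf_to_zero : Tendsto (f ∘ x) atTop (𝓝 0) := by
    refine squeeze_zero (fun k => hf (x k)) (fun k => ?_) (by simpa using hlim.mul_const (g y₀))
    exact (hmin k).penalty_le_of_penalized (hg _) (hlam k).le hy₀S hfy₀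
  refine ⟨hS.mem_of_mapClusterPt hcl (.of_forall hxS), ?_,
    isMinOn_iff.2 fun y ⟨hyS, hfy⟩ => ?_⟩
  · refine le_antisymm (le_of_forall_pos_le_add fun ε hε => ?_) (hf xstar)
    refine (hfc.isClosed_preimage (0 + ε)).mem_of_mapClusterPt hcl ?_
    exact hf_to_zero.eventually (ge_mem_nhds (lt_add_of_pos_right 0 hε))
  · exact (hgc.isClosed_preimage (g y)).mem_of_mapClusterPt hcl
      (.of_forall fun k => (hmin k).le_of_penalized (hf _) (hlam k) hyS hfy)

end PenaltyMethod

theorem rho_nonneg {a : ℝ} (ha : 0 ≤ a) (t : ℝ) : 0 ≤ rho a t := by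
  unfold rho; positivity

theorem continuous_rho {a : ℝ} (ha : 0 ≤ a) : Continuous (rho a) :=
  Continuous.div (by fun_prop) (by fun_prop) fun t => by positivity

theorem Pa_nonneg {n : ℕ} {a : ℝ} (ha : 0 ≤ a) (x : Fin n → ℝ) : 0 ≤ Pa a x :=
  Finset.sum_nonneg fun i _ => rho_nonneg ha (x i)

theorem continuous_Pa {n : ℕ} {a : ℝ} (ha : 0 ≤ a) :
    Continuous (Pa a : (Fin n → ℝ) → ℝ) :=
  continuous_finsetSum _ fun i _ => (continuous_rho ha).comp (continuous_apply i)

theorem sqN_nonneg {n : ℕ} (v : Fin n → ℝ) : 0 ≤ sqN v :=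
  Finset.sum_nonneg fun i _ => sq_nonneg (v i)

theorem sqN_eq_zero_iff {n : ℕ} {v : Fin n → ℝ} : sqN v = 0 ↔ v = 0 := by
  rw [sqN, Finset.sum_eq_zero_iff_of_nonneg fun i _ => sq_nonneg (v i)]
  simp [funext_iff]

theorem continuous_sqN {n : ℕ} : Continuous (sqN : (Fin n → ℝ) → ℝ) := by
  unfold sqN; fun_prop

theorem stmt7 {m n : ℕ} (a : ℝ) (ha : 0 < a)
    (A : Matrix (Fin m) (Fin n) ℝ) (b : Fin m → ℝ) (hne : (SOL A b).Nonempty)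
    (lam : ℕ → ℝ) (hlam : ∀ k, 0 < lam k)
    (hlim : Filter.Tendsto lam Filter.atTop (nhds 0))
    (xseq : ℕ → (Fin n → ℝ)) (hpos : ∀ k, 0 ≤ xseq k)
    (hminseq : ∀ k, ∀ x : Fin n → ℝ, 0 ≤ x →
      sqN (A.mulVec (xseq k) - b) + lam k * Pa a (xseq k) ≤
        sqN (A.mulVec x - b) + lam k * Pa a x)
    (xstar : Fin n → ℝ) (hcl : MapClusterPt xstar Filter.atTop xseq) :
    A.mulVec xstar = b ∧ 0 ≤ xstar ∧ ∀ x ∈ SOL A b, Pa a xstar ≤ Pa a x := by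
  have hres_zero : ∀ x, sqN (A.mulVec x - b) = 0 ↔ A.mulVec x = b := fun x => by
    rw [sqN_eq_zero_iff, sub_eq_zero]
  have hres_cont : Continuous fun x => sqN (A.mulVec x - b) :=
    continuous_sqN.comp
      ((Continuous.matrix_mulVec continuous_const continuous_id).sub continuous_const)
  have hfeas : ∃ x ∈ Set.Ici 0, sqN (A.mulVec x - b) = 0 :=
    hne.imp fun x hx => ⟨hx.2, (hres_zero x).2 hx.1⟩
  obtain ⟨hxstar_pos, hres, hmin⟩ :=
    isMinOn_of_mapClusterPt_penalized isClosed_Ici hres_cont.lowerSemicontinuous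
      (continuous_Pa ha.le).lowerSemicontinuous (fun x => sqN_nonneg _) (Pa_nonneg ha.le)
      hlam hlim hpos (fun k => isMinOn_iff.2 (hminseq k)) hfeas hcl
  exact ⟨(hres_zero xstar).1 hres, hxstar_pos,
    fun x hx => isMinOn_iff.1 hmin x ⟨hx.2, (hres_zero x).2 hx.1⟩⟩
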